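/- Let T = (C_n, R, σ) be a tanglegram of size n ≥ 5 where R = R1 ⊕ R2 is non-strippable (both |R1|, |R2| ≥ 2), and let {v_1,...,v_n} be a distance-to-root labeling of C_n. If v_n and v_{n-1} are matched to leaves in the same maximal pending subtree R_i of R, then in at least n - 2 cards of D^m(T) the two deepest leaves v'_{n-1}, v'_{n-2} of the resulting caterpillar C_{n-1} are matched to the same maximal pending subtree of the resulting right tree; if v_n and v_{n-1} are matched to different maximal pending subtrees, then exactly one card has this property. -/

import Mathlib

/-- A rooted binary tree: every vertex has zero or two children. -/
inductive RBT : Type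
  | leaf : RBT
  | node : RBT → RBT → RBT
deriving DecidableEq

namespace RBT
/-- Number of leaves. -/
def numLeaves : RBT → ℕ
  | leaf => 1
  | node l r => l.numLeaves + r.numLeaves

/-- Root-preserving isomorphism of rooted binary trees (children may be swapped). -/
inductive Iso : RBT → RBT → Prop
  | leaf : Iso leaf leaf
  | node {a b c d : RBT} : Iso a c → Iso b d → Iso (node a b) (node c d)
  | swap {a b c d : RBT} : Iso a d → Iso b c → Iso (node a b) (node c d)
end RBT

/-- A rooted binary tree with natural-number labels on its leaves. -/
inductive LTree : Type
  | leaf : ℕ → LTree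
  | node : LTree → LTree → LTree
deriving DecidableEq

namespace LTree

/-- The multiset of leaf labels. -/
def labels : LTree → Multiset ℕ
  | leaf a => {a}
  | node l r => l.labels + r.labels

/-- Relabel the leaves. -/
def map (f : ℕ → ℕ) : LTree → LTree
  | leaf a => leaf (f a)
  | node l r => node (map f l) (map f r)

/-- Forget the labels, obtaining a plain rooted binary tree. -/
def forget : LTree → RBT
  | leaf _ => .leaf
  | node l r => .node l.forget r.forget

/-- Delete the leaf (or leaves) with label `i`, suppressing the resulting degree-2 vertices;
returns `none` if nothing is left. -/
def del (i : ℕ) : LTree → Option LTree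
  | leaf a => if a = i then none else some (leaf a)
  | node l r =>
    match l.del i with
    | none => some r
    | some l' =>
      match r.del i with
      | none => some l'
      | some r' => some (node l' r')

/-- Label-preserving, root-preserving isomorphism of labeled trees (children may be swapped). -/
inductive LIso : LTree → LTree → Prop
  | leaf (a : ℕ) : LIso (leaf a) (leaf a)
  | node {a b c d : LTree} : LIso a c → LIso b d → LIso (node a b) (node c d)
  | swap {a b c d : LTree} : LIso a d → LIso b c → LIso (node a b) (node c d)

end LTree

/-- A tanglegram is modeled as a pair of labeled trees in which matched leaves carry the same
label: the labels of the left tree are distinct and coincide (as a multiset) with the labels of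
the right tree. -/
def IsTgl (p : LTree × LTree) : Prop := p.1.labels.Nodup ∧ p.1.labels = p.2.labels

/-- The size of a tanglegram: its number of matching edges. -/
def tglSize (p : LTree × LTree) : ℕ := Multiset.card p.1.labels

/-- Tanglegram isomorphism: a relabeling of the matching edges under which the left trees and
the right trees become isomorphic (mapping left root to left root and right root to right
root, and preserving the matching). -/
def TIso (p q : LTree × LTree) : Prop :=
  ∃ π : ℕ ≃ ℕ, LTree.LIso (p.1.map π) q.1 ∧ LTree.LIso (p.2.map π) q.2

/-- The card of a tanglegram obtained by deleting the matched leaf pair with label `i`. -/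
def tcard (p : LTree × LTree) (i : ℕ) : LTree × LTree :=
  ((p.1.del i).getD (.leaf 0), (p.2.del i).getD (.leaf 0))

/-- The multideck of a tanglegram: the multiset of cards obtained by deleting one matched leaf
pair in every possible way. -/
def tdeck (p : LTree × LTree) : Multiset (LTree × LTree) :=
  p.1.labels.map (fun i => tcard p i)

/-- `lcat k n` is the caterpillar on n leaves with a distance-to-root labeling whose labels are
k, k+1, ..., k+n-1 (label k+j-1 on the strippable leaf at distance j from the root). In
particular `lcat 1 n` is C_n with distance-to-root labeling v_1, ..., v_n. -/
def lcat : ℕ → ℕ → LTree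
  | k, 0 => .leaf k
  | k, 1 => .leaf k
  | k, n + 2 => .node (.leaf k) (lcat (k + 1) (n + 1))

/-- For a caterpillar-shaped labeled tree, the list of leaf labels in distance-to-root order. -/
def catList : LTree → List ℕ
  | .leaf a => [a]
  | .node (.leaf a) r => a :: catList r
  | .node l (.leaf a) => a :: catList l
  | .node _ _ => []

/-- The leaves with labels `a` and `b` lie in the same maximal pending subtree of `R`. -/
def sameSide : LTree → ℕ → ℕ → Bool
  | .leaf _, _, _ => false
  | .node r1 r2, a, b =>
      (decide (a ∈ r1.labels) && decide (b ∈ r1.labels)) ||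
      (decide (a ∈ r2.labels) && decide (b ∈ r2.labels))

/-- On the card of the size-n tanglegram (C_n, R, σ) obtained by deleting the matched pair
with label `i`, the two deepest leaves v'_{n-2} and v'_{n-1} of the resulting caterpillar
C_{n-1} are matched to leaves in the same maximal pending subtree of the resulting right
tree. -/
def deepPairSameSide (n i : ℕ) (p : LTree × LTree) : Bool :=
  match (catList (tcard p i).1)[n - 3]?, (catList (tcard p i).1)[n - 2]? with
  | some a, some b => sameSide (tcard p i).2 a b
  | _, _ => false

/-!
Deleting `v_i` from the caterpillar `C_n` leaves a caterpillar whose leaves keep their order, so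
the two deepest leaves of the card are `(v_{n-1}, v_n)` for `i ≤ n - 2`, `(v_{n-2}, v_n)` for
`i = n - 1` and `(v_{n-2}, v_{n-1})` for `i = n`. Since `R1` and `R2` both have at least two
leaves, deleting a leaf from `R = R1 ⊕ R2` keeps the root split, so two surviving leaves lie in the
same maximal pending subtree of the card exactly when they do in `R`. Hence each of the first
`n - 2` cards has the property iff `v_{n-1}` and `v_n` lie on the same side of `R`; if they do
not, `v_{n-2}` is on the side of exactly one of them, which singles out one of the last two cards.
-/

namespace LTree

theorem del_eq_none_iff {t : LTree} {i : ℕ} : t.del i = none ↔ t = leaf i := by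
  cases t with
  | leaf a => by_cases h : a = i <;> simp [del, h]
  | node l r =>
    simp only [del, reduceCtorEq, iff_false]
    split
    · simp
    · split <;> simp

theorem mem_labels_of_del_eq_some {t t' : LTree} {i a : ℕ} (h : t.del i = some t')
    (ha : a ≠ i) : a ∈ t'.labels ↔ a ∈ t.labels := by
  induction t generalizing t' with
  | leaf b =>
    by_cases hb : b = i <;> simp_all [del]
  | node l r ihl ihr =>
    simp only [del] at h
    rcases hl : l.del i with _ | l' <;> rw [hl] at h
    · cases h
      simp [labels, del_eq_none_iff.1 hl, ha]
    rcases hr : r.del i with _ | r' <;> rw [hr] at h <;> cases h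
    · simp [labels, del_eq_none_iff.1 hr, ha, ihl hl]
    · simp [labels, ihl hl, ihr hr]

theorem ne_leaf_of_two_le_card_labels {t : LTree} (h : 2 ≤ Multiset.card t.labels) (i : ℕ) :
    t ≠ leaf i := by
  rintro rfl
  simp [labels] at h

end LTree

open LTree

theorem sameSide_del_node {l r t : LTree} {i a b : ℕ} (hl : l ≠ leaf i) (hr : r ≠ leaf i)
    (h : (node l r).del i = some t) (ha : a ≠ i) (hb : b ≠ i) :
    sameSide t a b = sameSide (node l r) a b := by
  obtain ⟨l', hl'⟩ := Option.ne_none_iff_exists'.1 (mt del_eq_none_iff.1 hl)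
  obtain ⟨r', hr'⟩ := Option.ne_none_iff_exists'.1 (mt del_eq_none_iff.1 hr)
  simp only [del, hl', hr', Option.some.injEq] at h
  subst h
  simp [sameSide, mem_labels_of_del_eq_some hl', mem_labels_of_del_eq_some hr', ha, hb]

theorem sameSide_node_iff {l r : LTree} {a b : ℕ} (hnd : (node l r).labels.Nodup)
    (ha : a ∈ (node l r).labels) (hb : b ∈ (node l r).labels) :
    sameSide (node l r) a b = true ↔ (a ∈ l.labels ↔ b ∈ l.labels) := by
  simp only [labels, Multiset.mem_add] at ha hb hnd
  have hdisj : ∀ x ∈ l.labels, x ∉ r.labels := fun _ hx =>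
    Multiset.disjoint_left.1 (Multiset.nodup_add.1 hnd).2.2 hx
  simp only [sameSide, Bool.or_eq_true, Bool.and_eq_true, decide_eq_true_eq]
  grind

theorem xor_sameSide_of_sameSide_eq_false {l r : LTree} {a b c : ℕ}
    (hnd : (node l r).labels.Nodup) (ha : a ∈ (node l r).labels) (hb : b ∈ (node l r).labels)
    (hc : c ∈ (node l r).labels) (hbc : sameSide (node l r) b c = false) :
    Xor (sameSide (node l r) a c = true) (sameSide (node l r) a b = true) := by
  rw [← Bool.not_eq_true, sameSide_node_iff hnd hb hc] at hbc
  rw [sameSide_node_iff hnd ha hc, sameSide_node_iff hnd ha hb]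
  unfold Xor
  tauto

theorem sameSide_comm (t : LTree) (a b : ℕ) : sameSide t a b = sameSide t b a := by
  cases t <;> simp only [sameSide, Bool.and_comm]

-- `lcat k 0` is the one-leaf tree `leaf k`, not an empty tree.
theorem labels_lcat {n : ℕ} (hn : n ≠ 0) (k : ℕ) :
    (lcat k n).labels = (List.range' k n : Multiset ℕ) := by
  obtain ⟨n, rfl⟩ := Nat.exists_eq_succ_of_ne_zero hn
  clear hn
  induction n generalizing k with
  | zero => rfl
  | succ n ih =>
    rw [List.range'_succ, lcat, labels, labels, ih]
    rfl

theorem catList_lcat (k n : ℕ) : catList (lcat k (n + 1)) = List.range' k (n + 1) := by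
  induction n generalizing k with
  | zero => rfl
  | succ n ih => rw [List.range'_succ, lcat, catList, ih]

theorem catList_del_lcat (k n i : ℕ) :
    ((lcat k (n + 1)).del i).elim [] catList = (List.range' k (n + 1)).erase i := by
  induction n generalizing k with
  | zero => by_cases h : k = i <;> simp [lcat, del, catList, h]
  | succ n ih =>
    rw [List.range'_succ, lcat, del]
    by_cases h : k = i
    · subst h
      simp [del, catList_lcat]
    · rw [List.erase_cons_tail (by simpa using h), ← ih]
      rcases (lcat (k + 1) (n + 1)).del i with _ | t <;> simp [del, h, catList]

theorem catList_tcard_lcat {k n : ℕ} (hn : 2 ≤ n) (R : LTree) (i : ℕ) :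
    catList (tcard (lcat k n, R) i).1 = (List.range' k n).erase i := by
  obtain ⟨n, rfl⟩ := Nat.exists_eq_add_of_le' hn
  have hnode : lcat k (n + 2) ≠ leaf i := by rw [lcat]; exact LTree.noConfusion
  obtain ⟨t, ht⟩ := Option.ne_none_iff_exists'.1 (mt del_eq_none_iff.1 hnode)
  simpa [tcard, ht] using catList_del_lcat k (n + 1) i

theorem getElem?_erase_range' {k n i j : ℕ} (hki : k ≤ i) (hj : j + 1 < n) :
    ((List.range' k n).erase i)[j]? = some (if k + j < i then k + j else k + j + 1) := by
  induction n generalizing k i j with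
  | zero => omega
  | succ n ih =>
    rw [List.range'_succ]
    rcases hki.eq_or_lt with rfl | hki
    · rw [List.erase_cons_head, List.getElem?_range' (by omega)]
      simp; omega
    · rw [List.erase_cons_tail (by simp; omega)]
      cases j with
      | zero => simp [hki]
      | succ j =>
        rw [List.getElem?_cons_succ, ih (by omega) (by omega)]
        split_ifs <;> (try simp only [Option.some.injEq]) <;> omega

theorem deepPairSameSide_lcat_node {n i : ℕ} {R1 R2 : LTree} (hR1 : R1 ≠ leaf i)
    (hR2 : R2 ≠ leaf i) (hn : 3 ≤ n) (hi1 : 1 ≤ i) (hin : i ≤ n) :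
    deepPairSameSide n i (lcat 1 n, node R1 R2) =
      sameSide (node R1 R2) (if i ≤ n - 2 then n - 1 else n - 2) (if i = n then n - 1 else n) := by
  have hnode : node R1 R2 ≠ leaf i := LTree.noConfusion
  obtain ⟨t, ht⟩ := Option.ne_none_iff_exists'.1 (mt del_eq_none_iff.1 hnode)
  rw [deepPairSameSide, catList_tcard_lcat (by omega), getElem?_erase_range' hi1 (by omega),
    getElem?_erase_range' hi1 (by omega)]
  simp only [tcard, ht, Option.getD_some]
  rw [sameSide_del_node hR1 hR2 ht (by split_ifs <;> omega) (by split_ifs <;> omega)]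
  congr 1 <;> split_ifs <;> omega

theorem card_filter_Icc_eq_one {n : ℕ} {p : ℕ → Prop} [DecidablePred p] (hn : 2 ≤ n)
    (hlow : ∀ i ∈ Finset.Icc 1 (n - 2), ¬ p i) (hxor : Xor (p (n - 1)) (p n)) :
    ((Finset.Icc 1 n).filter p).card = 1 := by
  refine Finset.card_eq_one.2 ⟨if p (n - 1) then n - 1 else n, Finset.ext fun i => ?_⟩
  simp only [Finset.mem_filter, Finset.mem_Icc, Finset.mem_singleton] at hlow ⊢
  rcases (by omega : i = 0 ∨ i ≤ n - 2 ∨ i = n - 1 ∨ i = n ∨ n < i) with h | h | rfl | rfl | h <;>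
    unfold Xor at hxor <;> split_ifs <;> grind

theorem nonstrippable_right_tree_deep_pair_general (n : ℕ) (R1 R2 : LTree)
    (hlab : (LTree.node R1 R2).labels = (lcat 1 n).labels)
    (h1 : 2 ≤ Multiset.card R1.labels) (h2 : 2 ≤ Multiset.card R2.labels) :
    ∀ T : LTree × LTree, T = (lcat 1 n, LTree.node R1 R2) →
      (sameSide (LTree.node R1 R2) n (n - 1) = true →
        n - 2 ≤ ((Finset.Icc 1 n).filter (fun i => deepPairSameSide n i T = true)).card) ∧
      (sameSide (LTree.node R1 R2) n (n - 1) = false →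
        ((Finset.Icc 1 n).filter (fun i => deepPairSameSide n i T = true)).card = 1) := by
  rintro T rfl
  have hcard := congrArg Multiset.card hlab
  have hn0 : n ≠ 0 := by rintro rfl; simp [labels, lcat] at hcard; omega
  rw [labels_lcat hn0] at hlab hcard
  simp only [labels, Multiset.card_add, Multiset.coe_card, List.length_range'] at hcard
  have hmem (a : ℕ) (ha1 : 1 ≤ a) (han : a ≤ n) : a ∈ (node R1 R2).labels := by
    rw [hlab, Multiset.mem_coe, List.mem_range'_1]; omega
  have hdeep (i : ℕ) (hi1 : 1 ≤ i) (hin : i ≤ n) :=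
    deepPairSameSide_lcat_node (ne_leaf_of_two_le_card_labels h1 i)
      (ne_leaf_of_two_le_card_labels h2 i) (by omega) hi1 hin
  constructor
  · intro hsame
    calc n - 2 = (Finset.Icc 1 (n - 2)).card := by simp
      _ ≤ _ := Finset.card_le_card fun i hi => by
        obtain ⟨hi1, hi2⟩ := Finset.mem_Icc.1 hi
        rw [Finset.mem_filter, hdeep i hi1 (by omega), if_pos hi2, if_neg (by omega),
          sameSide_comm, hsame, Finset.mem_Icc]
        exact ⟨⟨hi1, by omega⟩, rfl⟩
  · intro hdiff
    refine card_filter_Icc_eq_one (by omega) (fun i hi => ?_) ?_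
    · obtain ⟨hi1, hi2⟩ := Finset.mem_Icc.1 hi
      rw [hdeep i hi1 (by omega), if_pos hi2, if_neg (by omega), sameSide_comm, hdiff]
      exact Bool.false_ne_true
    · rw [hdeep (n - 1) (by omega) (by omega), hdeep n (by omega) le_rfl, if_neg (by omega),
        if_neg (by omega), if_neg (by omega), if_pos rfl]
      exact xor_sameSide_of_sameSide_eq_false (hlab ▸ List.nodup_range')
        (hmem _ (by omega) (by omega)) (hmem _ (by omega) (by omega)) (hmem _ (by omega) le_rfl) (by rwa [sameSide_comm])

/-- Let T = (C_n, R, σ) be a tanglegram of size n ≥ 5 with left tree the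
caterpillar `lcat 1 n` (distance-to-root labeling v_1, …, v_n, matching given by equal
labels) and right tree R = R1 ⊕ R2 non-strippable (|R1|, |R2| ≥ 2). If v_n and v_{n-1} are
matched to leaves in the same maximal pending subtree of R, then at least n - 2 of the n
cards have their two deepest left leaves v'_{n-1}, v'_{n-2} matched to the same maximal
pending subtree of the card's right tree; if v_n and v_{n-1} are matched to different
maximal pending subtrees, then exactly one card has this property. -/
theorem nonstrippable_right_tree_deep_pair (n : ℕ) (hn : 5 ≤ n) (R1 R2 : LTree)
    (hlab : (LTree.node R1 R2).labels = (lcat 1 n).labels)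
    (h1 : 2 ≤ Multiset.card R1.labels) (h2 : 2 ≤ Multiset.card R2.labels) :
    ∀ T : LTree × LTree, T = (lcat 1 n, LTree.node R1 R2) →
      (sameSide (LTree.node R1 R2) n (n - 1) = true →
        n - 2 ≤ ((Finset.Icc 1 n).filter (fun i => deepPairSameSide n i T = true)).card) ∧
      (sameSide (LTree.node R1 R2) n (n - 1) = false →
        ((Finset.Icc 1 n).filter (fun i => deepPairSameSide n i T = true)).card = 1) :=
  nonstrippable_right_tree_deep_pair_general n R1 R2 hlab h1 h2
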